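/- Let s ∈ (1/2,1). Then BMO^s = Ḣ^s with equivalent norms: there exist constants c, C > 0 depending only on s such that for every real-valued b ∈ L¹([0,1]), b ∈ BMO^s if and only if ‖b‖_{Ḣ^s} < ∞, and in this case c ‖b‖_{Ḣ^s} ≤ ‖b‖_{BMO^s} ≤ C ‖b‖_{Ḣ^s}. -/

import Mathlib

open MeasureTheory Filter
open scoped ENNReal NNReal

noncomputable section

/-- A dyadic subinterval of `[0,1]`: the interval `[k/2^j, (k+1)/2^j)`. -/
structure DI where
  j : ℕ
  k : ℕ
  hk : k < 2 ^ j

namespace DI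

/-- The underlying set of a dyadic interval. -/
def set (p : DI) : Set ℝ := Set.Ico ((p.k : ℝ) / 2 ^ p.j) (((p.k : ℝ) + 1) / 2 ^ p.j)

/-- The length `|I|` of a dyadic interval. -/
def len (p : DI) : ℝ := 1 / 2 ^ p.j

/-- The left child `I₋`. -/
def left (p : DI) : DI := ⟨p.j + 1, 2 * p.k, by have := p.hk; rw [pow_succ]; omega⟩

/-- The right child `I₊`. -/
def right (p : DI) : DI := ⟨p.j + 1, 2 * p.k + 1, by have := p.hk; rw [pow_succ]; omega⟩

/-- The root interval `[0,1)`. -/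
def root : DI := ⟨0, 0, by norm_num⟩

end DI

/-- The unit interval `[0,1]`. -/
def I01 : Set ℝ := Set.Icc 0 1

/-- The inner product `(f,g) = ∫₀¹ f g`. -/
def inn (f g : ℝ → ℝ) : ℝ := ∫ x in I01, f x * g x

/-- The average `⟨f⟩_I = |I|⁻¹ ∫_I f`. -/
def avg (f : ℝ → ℝ) (p : DI) : ℝ := (1 / p.len) * ∫ x in p.set, f x

/-- The Haar function `h_I = |I|^{-1/2} (𝟙_{I₋} - 𝟙_{I₊})`. -/
def haar (p : DI) : ℝ → ℝ := fun x =>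
  (Real.sqrt p.len)⁻¹ *
    (Set.indicator p.left.set (1 : ℝ → ℝ) x - Set.indicator p.right.set (1 : ℝ → ℝ) x)

/-- Membership in `L²([0,1])`. -/
def MemL2 (f : ℝ → ℝ) : Prop := MemLp f 2 (volume.restrict I01)

/-- The squared homogeneous seminorm `‖f‖_{Ḣ^s}² = Σ_I |I|^{-2s} (f,h_I)²`
(which equals `‖D^s f‖_{L²}²` by orthonormality of the Haar system). -/
def hdotSq (s : ℝ) (f : ℝ → ℝ) : ℝ≥0∞ :=
  ∑' p : DI, ENNReal.ofReal (p.len ^ (-(2 * s)) * (inn f (haar p)) ^ 2)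

/-- The squared Sobolev norm `‖f‖_{H^s}² = ‖D^s f‖_{L²}² + ‖f‖_{L²}²`. -/
def hsNormSq (s : ℝ) (f : ℝ → ℝ) : ℝ≥0∞ :=
  hdotSq s f + ENNReal.ofReal (∫ x in I01, (f x) ^ 2)

/-- The Sobolev norm `‖f‖_{H^s}`. -/
def hsNorm (s : ℝ) (f : ℝ → ℝ) : ℝ≥0∞ := hsNormSq s f ^ (1 / 2 : ℝ)

/-- The homogeneous seminorm `‖f‖_{Ḣ^s}`. -/
def hdotNorm (s : ℝ) (f : ℝ → ℝ) : ℝ≥0∞ := hdotSq s f ^ (1 / 2 : ℝ)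

/-- Membership in the local dyadic fractional Sobolev space `H^s`. -/
def MemHs (s : ℝ) (f : ℝ → ℝ) : Prop := MemL2 f ∧ hsNormSq s f < ⊤

/-- The dyadic Sobolev `s`-capacity `Cap_s(E)`; equals `∞` if no admissible function exists. -/
def capa (s : ℝ) (E : Set ℝ) : ℝ≥0∞ :=
  ⨅ (f : ℝ → ℝ) (_ : MemHs s f) (_ : ∀ᵐ x ∂(volume.restrict E), 1 ≤ f x), hsNormSq s f

/-- The squared `BMO^s` norm: supremum over finite pairwise disjoint families of dyadic
intervals of `Cap_s(⋃ I_k)⁻¹ Σ_k Σ_{J ⊆ I_k} |J|^{-2s} (b,h_J)²`. -/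
def bmoSq (s : ℝ) (b : ℝ → ℝ) : ℝ≥0∞ :=
  ⨆ (F : Finset DI) (_ : (F : Set DI).Pairwise fun p q => Disjoint p.set q.set),
    (∑ p ∈ F, ∑' J : {J : DI // J.set ⊆ p.set},
        ENNReal.ofReal ((J : DI).len ^ (-(2 * s)) * (inn b (haar J)) ^ 2)) /
      capa s (⋃ p ∈ F, p.set)

/-- The `BMO^s` norm. -/
def bmoNorm (s : ℝ) (b : ℝ → ℝ) : ℝ≥0∞ := bmoSq s b ^ (1 / 2 : ℝ)

/-- `b ∈ BMO^s`. -/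
def MemBMOs (s : ℝ) (b : ℝ → ℝ) : Prop := bmoSq s b ≠ ⊤

/-- The truncated (small scales `|J| < 2^{-N}`) `BMO^s`-type quantity appearing in the
definition of `CMO^s`. -/
def cmoTrunc (s : ℝ) (b : ℝ → ℝ) (N : ℕ) : ℝ≥0∞ :=
  ⨆ (F : Finset DI) (_ : (F : Set DI).Pairwise fun p q => Disjoint p.set q.set),
    (∑ p ∈ F, ∑' J : {J : DI // J.set ⊆ p.set ∧ J.len < 1 / 2 ^ N},
        ENNReal.ofReal ((J : DI).len ^ (-(2 * s)) * (inn b (haar J)) ^ 2)) /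
      capa s (⋃ p ∈ F, p.set)

/-- `b ∈ CMO^s`. -/
def MemCMOs (s : ℝ) (b : ℝ → ℝ) : Prop :=
  bmoSq s b ≠ ⊤ ∧ Tendsto (cmoTrunc s b) atTop (nhds 0)

/-- The dyadic paraproduct `Π_b f = Σ_I (b,h_I) ⟨f⟩_I h_I`. -/
def para (b f : ℝ → ℝ) : ℝ → ℝ := fun x => ∑' p : DI, inn b (haar p) * avg f p * haar p x

/-- The operator `Π̃_b f = Σ_I (f,h_I)(b,h_I)|I|⁻¹ 𝟙_I + ⟨f⟩_{[0,1]} ⟨b⟩_{[0,1]}`. -/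
def paraT (b f : ℝ → ℝ) : ℝ → ℝ := fun x =>
  (∑' p : DI, inn f (haar p) * inn b (haar p) * (1 / p.len) * Set.indicator p.set (1 : ℝ → ℝ) x)
    + avg f DI.root * avg b DI.root

/-- The Haar shift `Ш f = Σ_I (f,h_I)(h_{I₋} - h_{I₊})`. -/
def shaar (f : ℝ → ℝ) : ℝ → ℝ := fun x =>
  ∑' p : DI, inn f (haar p) * (haar p.left x - haar p.right x)

/-- The commutator `[b,Ш]f = b·Шf − Ш(b·f)`. -/
def commSh (b f : ℝ → ℝ) : ℝ → ℝ := fun x =>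
  b x * shaar f x - shaar (fun y => b y * f y) x

/-- The dyadic fractional integral `T^s f = Σ_I |I|^s ⟨f⟩_I 𝟙_I`. -/
def Ts (s : ℝ) (f : ℝ → ℝ) : ℝ → ℝ := fun x =>
  ∑' p : DI, p.len ^ s * avg f p * Set.indicator p.set (1 : ℝ → ℝ) x

/-- The modified dyadic fractional derivative `J^s f = Σ_I |I|^{-s}(f,h_I) h_I + 2^{-s}⟨f⟩_{[0,1]}`. -/
def Js (s : ℝ) (f : ℝ → ℝ) : ℝ → ℝ := fun x =>
  (∑' p : DI, p.len ^ (-s) * inn f (haar p) * haar p x) + (2 : ℝ) ^ (-s) * avg f DI.root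

/-- The dyadic fractional derivative `D^s f = Σ_I |I|^{-s}(f,h_I) h_I`. -/
def Ds (s : ℝ) (f : ℝ → ℝ) : ℝ → ℝ := fun x =>
  ∑' p : DI, p.len ^ (-s) * inn f (haar p) * haar p x

/-- The dyadic maximal operator `M f = sup_I ⟨|f|⟩_I 𝟙_I`. -/
def maxOp (f : ℝ → ℝ) : ℝ → ℝ := fun x =>
  ⨆ p : DI, Set.indicator p.set (fun _ => avg (fun y => |f y|) p) x

/-- Compactness of an operator `T` on `H^s`: every sequence in the unit ball of `H^s`
has a subsequence whose image under `T` converges in the `H^s` norm. -/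
def HsCompact (s : ℝ) (T : (ℝ → ℝ) → ℝ → ℝ) : Prop :=
  ∀ f : ℕ → ℝ → ℝ, (∀ n, MemHs s (f n)) → (∀ n, hsNorm s (f n) ≤ 1) →
    ∃ (φ : ℕ → ℕ) (g : ℝ → ℝ), StrictMono φ ∧ MemHs s g ∧
      Tendsto (fun k => hsNorm s (fun x => T (f (φ k)) x - g x)) atTop (nhds 0)
section Basics

lemma DI.len_pos (p : DI) : 0 < p.len := by
  rw [DI.len]; positivity

lemma DI.ext' (p q : DI) (h1 : p.j = q.j) (h2 : p.k = q.k) : p = q := by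
  cases p; cases q; simp_all

lemma DI.set_nonempty (p : DI) : p.set.Nonempty := by
  rw [DI.set, Set.nonempty_Ico]
  have h : (0:ℝ) < 2 ^ p.j := by positivity
  rw [div_lt_div_iff₀ h h]
  nlinarith

lemma DI.set_subset (p : DI) : p.set ⊆ Set.Ico (0:ℝ) 1 := by
  rw [DI.set]
  apply Set.Ico_subset_Ico
  · positivity
  · rw [div_le_one (by positivity)]
    have := p.hk
    have : (p.k : ℝ) + 1 ≤ 2 ^ p.j := by exact_mod_cast Nat.succ_le_of_lt this
    simpa using this

lemma DI.subset_I01 (p : DI) : p.set ⊆ I01 :=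
  p.set_subset.trans (Set.Ico_subset_Icc_self)

lemma DI.measSet (p : DI) : MeasurableSet p.set := measurableSet_Ico

lemma DI.volume_set (p : DI) : MeasureTheory.volume p.set = ENNReal.ofReal p.len := by
  rw [DI.set, Real.volume_Ico, DI.len]
  congr 1
  field_simp; ring

lemma DI.left_len (p : DI) : p.left.len = p.len / 2 := by
  simp [DI.left, DI.len, pow_succ]; ring

lemma DI.right_len (p : DI) : p.right.len = p.len / 2 := by
  simp [DI.right, DI.len, pow_succ]; ring

lemma DI.mid_eq₁ (p : DI) : ((2 * p.k : ℕ) : ℝ) / 2 ^ (p.j + 1) = (p.k : ℝ) / 2 ^ p.j := by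
  push_cast; rw [pow_succ]; field_simp

lemma DI.mid_eq₂ (p : DI) : ((2 * p.k + 1 : ℕ) : ℝ) + 1 = 2 * ((p.k : ℝ) + 1) := by
  push_cast; ring

end Basics
lemma DI.ep1 (p : DI) : ((2 * p.k : ℕ) : ℝ) / 2 ^ (p.j + 1) = (p.k : ℝ) / 2 ^ p.j := by
  push_cast; rw [pow_succ]; field_simp

lemma DI.ep2 (p : DI) :
    (((2 * p.k : ℕ) : ℝ) + 1) / 2 ^ (p.j + 1) = ((2 * p.k + 1 : ℕ) : ℝ) / 2 ^ (p.j + 1) := by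
  push_cast; ring

lemma DI.ep3 (p : DI) :
    (((2 * p.k + 1 : ℕ) : ℝ) + 1) / 2 ^ (p.j + 1) = ((p.k : ℝ) + 1) / 2 ^ p.j := by
  push_cast; rw [pow_succ]; field_simp; ring

lemma DI.set_eq_union (p : DI) : p.set = p.left.set ∪ p.right.set := by
  have e1 := p.ep1; have e2 := p.ep2; have e3 := p.ep3
  have hp : (0:ℝ) < 2 ^ (p.j + 1) := by positivity
  rw [DI.set, DI.left, DI.right, DI.set, DI.set]
  simp only
  rw [e1, e2, e3, Set.Ico_union_Ico_eq_Ico]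
  · rw [← e1, div_le_div_iff₀ hp hp]
    push_cast; nlinarith [hp]
  · rw [← e3, div_le_div_iff₀ hp hp]
    push_cast; nlinarith [hp]

lemma DI.disj_children (p : DI) : Disjoint p.left.set p.right.set := by
  rw [DI.left, DI.right, DI.set, DI.set]
  simp only
  apply Set.Ico_disjoint_Ico.mpr
  exact le_trans (min_le_left _ _) (le_trans (le_of_eq (by push_cast; ring)) (le_max_right _ _))
section Integ
open MeasureTheory

instance : IsFiniteMeasure (volume.restrict I01) := by
  constructor
  rw [Measure.restrict_apply_univ]
  rw [I01, Real.volume_Icc]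
  norm_num

/-- integral over a dyadic interval -/
noncomputable def itg (f : ℝ → ℝ) (p : DI) : ℝ := ∫ x in p.set, f x

lemma itg_split (f : ℝ → ℝ) (hf : IntegrableOn f I01) (p : DI) :
    itg f p = itg f p.left + itg f p.right := by
  rw [itg, itg, itg, p.set_eq_union]
  exact setIntegral_union p.disj_children p.right.measSet
    (hf.mono_set (p.left.subset_I01)) (hf.mono_set (p.right.subset_I01))

lemma int_mul_indicator (f : ℝ → ℝ) (hf : IntegrableOn f I01) (A : Set ℝ) (hA : A ⊆ I01)
    (mA : MeasurableSet A) :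
    (∫ x in I01, f x * Set.indicator A (1 : ℝ → ℝ) x) = ∫ x in A, f x := by
  have h : (fun x => f x * Set.indicator A (1:ℝ→ℝ) x) = Set.indicator A f := by
    funext x; by_cases h : x ∈ A <;> simp [h]
  rw [h, integral_indicator mA, Measure.restrict_restrict mA,
    Set.inter_eq_self_of_subset_left hA]

lemma inn_haar (f : ℝ → ℝ) (hf : IntegrableOn f I01) (p : DI) :
    inn f (haar p) = (Real.sqrt p.len)⁻¹ * (itg f p.left - itg f p.right) := by
  rw [inn]
  have h : (fun x => f x * haar p x) =
      fun x => (Real.sqrt p.len)⁻¹ * (f x * Set.indicator p.left.set (1:ℝ→ℝ) x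
        - f x * Set.indicator p.right.set (1:ℝ→ℝ) x) := by
    funext x; rw [haar]; ring
  rw [show (∫ x in I01, f x * haar p x) = ∫ x in I01, (Real.sqrt p.len)⁻¹ *
      (f x * Set.indicator p.left.set (1:ℝ→ℝ) x - f x * Set.indicator p.right.set (1:ℝ→ℝ) x)
    from by rw [← h]]
  rw [integral_const_mul]
  congr 1
  have hil : Integrable (fun x => f x * Set.indicator p.left.set (1:ℝ→ℝ) x) (volume.restrict I01) := by
    have h2 : (fun x => f x * Set.indicator p.left.set (1:ℝ→ℝ) x) = Set.indicator p.left.set f := by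
      funext x; by_cases h : x ∈ p.left.set <;> simp [h]
    rw [h2]; exact hf.indicator p.left.measSet
  have hir : Integrable (fun x => f x * Set.indicator p.right.set (1:ℝ→ℝ) x) (volume.restrict I01) := by
    have h2 : (fun x => f x * Set.indicator p.right.set (1:ℝ→ℝ) x) = Set.indicator p.right.set f := by
      funext x; by_cases h : x ∈ p.right.set <;> simp [h]
    rw [h2]; exact hf.indicator p.right.measSet
  rw [integral_sub hil hir, int_mul_indicator f hf _ p.left.subset_I01 p.left.measSet,
    int_mul_indicator f hf _ p.right.subset_I01 p.right.measSet]
  rfl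

lemma sqrt_len_pos (p : DI) : 0 < Real.sqrt p.len := Real.sqrt_pos.mpr p.len_pos

lemma avg_eq (f : ℝ → ℝ) (p : DI) : avg f p = (1 / p.len) * itg f p := rfl

lemma avg_left (f : ℝ → ℝ) (hf : IntegrableOn f I01) (p : DI) :
    avg f p.left = avg f p + (Real.sqrt p.len)⁻¹ * inn f (haar p) := by
  rw [avg_eq, avg_eq, p.left_len, inn_haar f hf, itg_split f hf p]
  have h1 := p.len_pos
  have h2 := sqrt_len_pos p
  have h3 : Real.sqrt p.len * Real.sqrt p.len = p.len := Real.mul_self_sqrt h1.le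
  field_simp
  rw [Real.sq_sqrt h1.le]; ring

lemma avg_right (f : ℝ → ℝ) (hf : IntegrableOn f I01) (p : DI) :
    avg f p.right = avg f p - (Real.sqrt p.len)⁻¹ * inn f (haar p) := by
  rw [avg_eq, avg_eq, p.right_len, inn_haar f hf, itg_split f hf p]
  have h1 := p.len_pos
  have h2 := sqrt_len_pos p
  have h3 : Real.sqrt p.len * Real.sqrt p.len = p.len := Real.mul_self_sqrt h1.le
  field_simp
  rw [Real.sq_sqrt h1.le]; ring

end Integ
section Chain
open MeasureTheory Finset

lemma DI.len_rpow (p : DI) (x : ℝ) : p.len ^ x = ((2:ℝ) ^ (-x)) ^ (p.j : ℕ) := by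
  have h2 : (0:ℝ) ≤ 2 := by norm_num
  rw [DI.len, one_div, ← Real.rpow_natCast (2:ℝ) p.j, ← Real.rpow_neg h2,
    ← Real.rpow_mul h2, ← Real.rpow_natCast ((2:ℝ) ^ (-x)) p.j, ← Real.rpow_mul h2]
  ring_nf

lemma coeff_bound (s : ℝ) (f : ℝ → ℝ) (hfin : hdotSq s f ≠ ⊤) (p : DI) :
    p.len ^ (-s) * |inn f (haar p)| ≤ Real.sqrt (hdotSq s f).toReal := by
  have hl := p.len_pos
  have hterm : (0:ℝ) ≤ p.len ^ (-(2*s)) * (inn f (haar p))^2 := by positivity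
  have hle : ENNReal.ofReal (p.len ^ (-(2*s)) * (inn f (haar p))^2) ≤ hdotSq s f :=
    ENNReal.le_tsum p
  have h2 : p.len ^ (-(2*s)) * (inn f (haar p))^2 ≤ (hdotSq s f).toReal := by
    have := ENNReal.toReal_mono hfin hle
    rwa [ENNReal.toReal_ofReal hterm] at this
  apply Real.le_sqrt_of_sq_le
  calc (p.len ^ (-s) * |inn f (haar p)|)^2 = (p.len ^ (-s))^2 * (inn f (haar p))^2 := by
        rw [mul_pow, sq_abs]
    _ = p.len ^ (-(2*s)) * (inn f (haar p))^2 := by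
        congr 1
        rw [← Real.rpow_natCast (p.len ^ (-s)) 2, ← Real.rpow_mul hl.le]
        congr 1
        push_cast; ring
    _ ≤ _ := h2

lemma inv_sqrt_len (p : DI) : (Real.sqrt p.len)⁻¹ = p.len ^ (-(1/2) : ℝ) := by
  rw [Real.sqrt_eq_rpow, ← Real.rpow_neg p.len_pos.le]

/-- key single-scale bound -/
lemma step_bound (s : ℝ) (hs : s ∈ Set.Ioo (1/2 : ℝ) 1) (f : ℝ → ℝ)
    (hfin : hdotSq s f ≠ ⊤) (q : DI) :
    (Real.sqrt q.len)⁻¹ * |inn f (haar q)| ≤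
      ((2:ℝ) ^ ((1:ℝ)/2 - s)) ^ (q.j : ℕ) * Real.sqrt (hdotSq s f).toReal := by
  have hl := q.len_pos
  have h1 : (Real.sqrt q.len)⁻¹ = q.len ^ (s - 1/2 : ℝ) * q.len ^ (-s : ℝ) := by
    rw [inv_sqrt_len, ← Real.rpow_add hl]
    congr 1; ring
  rw [h1, mul_assoc]
  have h2 : q.len ^ (s - 1/2 : ℝ) = ((2:ℝ) ^ ((1:ℝ)/2 - s)) ^ (q.j : ℕ) := by
    rw [q.len_rpow (s - 1/2)]
    norm_num
  rw [h2]
  apply mul_le_mul_of_nonneg_left (coeff_bound s f hfin q)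
  positivity

lemma avg_chain_bound (s : ℝ) (hs : s ∈ Set.Ioo (1/2 : ℝ) 1) (f : ℝ → ℝ)
    (hf : IntegrableOn f I01) (hfin : hdotSq s f ≠ ⊤) :
    ∀ j : ℕ, ∀ p : DI, p.j = j →
      |avg f p - avg f DI.root| ≤
        (∑ i ∈ Finset.range j, ((2:ℝ) ^ ((1:ℝ)/2 - s)) ^ i) * Real.sqrt (hdotSq s f).toReal := by
  intro j
  induction j with
  | zero =>
    intro p hp
    have : p = DI.root := by
      apply DI.ext' _ _ hp
      have := p.hk
      rw [hp] at this
      simpa [DI.root] using this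
    rw [this]
    simp
  | succ j ih =>
    rintro ⟨jj, k, hk⟩ hp
    simp only at hp
    subst hp
    have hk' : k / 2 < 2 ^ j := by
      rw [pow_succ] at hk; omega
    set q : DI := ⟨j, k / 2, hk'⟩ with hq
    have hqj : q.j = j := rfl
    have hsb := step_bound s hs f hfin q
    have hih := ih q rfl
    have habs : |avg f ⟨j+1, k, hk⟩ - avg f q| ≤ (Real.sqrt q.len)⁻¹ * |inn f (haar q)| := by
      rcases Nat.even_or_odd k with he | ho
      · have : (⟨j+1, k, hk⟩ : DI) = q.left := by
          apply DI.ext'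
          · rfl
          · show k = 2 * (k / 2)
            obtain ⟨m, hm⟩ := he; omega
        rw [this, avg_left f hf q]
        rw [add_sub_cancel_left, abs_mul, abs_inv, abs_of_pos (sqrt_len_pos q)]
      · have : (⟨j+1, k, hk⟩ : DI) = q.right := by
          apply DI.ext'
          · rfl
          · show k = 2 * (k / 2) + 1
            obtain ⟨m, hm⟩ := ho; omega
        rw [this, avg_right f hf q]
        rw [sub_sub_cancel_left, abs_neg, abs_mul, abs_inv, abs_of_pos (sqrt_len_pos q)]
    calc |avg f ⟨j+1, k, hk⟩ - avg f DI.root|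
        ≤ |avg f ⟨j+1, k, hk⟩ - avg f q| + |avg f q - avg f DI.root| := abs_sub_le _ _ _
      _ ≤ (Real.sqrt q.len)⁻¹ * |inn f (haar q)|
            + (∑ i ∈ Finset.range j, ((2:ℝ) ^ ((1:ℝ)/2 - s)) ^ i) * Real.sqrt (hdotSq s f).toReal :=
          add_le_add habs hih
      _ ≤ ((2:ℝ) ^ ((1:ℝ)/2 - s)) ^ (j : ℕ) * Real.sqrt (hdotSq s f).toReal
            + (∑ i ∈ Finset.range j, ((2:ℝ) ^ ((1:ℝ)/2 - s)) ^ i) * Real.sqrt (hdotSq s f).toReal := by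
          refine add_le_add ?_ le_rfl
          simpa [hqj] using hsb
      _ = _ := by
          rw [Finset.sum_range_succ]
          ring
end Chain
section Capa
open MeasureTheory

noncomputable def rr (s : ℝ) : ℝ := (2:ℝ) ^ ((1:ℝ)/2 - s)

noncomputable def c0 (s : ℝ) : ℝ := min (1/4) (((1 - rr s)/4)^2)

lemma rr_pos (s : ℝ) : 0 < rr s := Real.rpow_pos_of_pos (by norm_num) _

lemma rr_lt_one {s : ℝ} (hs : s ∈ Set.Ioo (1/2 : ℝ) 1) : rr s < 1 := by
  apply Real.rpow_lt_one_of_one_lt_of_neg (by norm_num)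
  linarith [hs.1]

lemma c0_pos {s : ℝ} (hs : s ∈ Set.Ioo (1/2 : ℝ) 1) : 0 < c0 s := by
  apply lt_min (by norm_num)
  have h : (0:ℝ) < 1 - rr s := by linarith [rr_lt_one hs]
  exact pow_pos (div_pos h (by norm_num)) 2

lemma geom_bound {s : ℝ} (hs : s ∈ Set.Ioo (1/2 : ℝ) 1) (n : ℕ) :
    (∑ i ∈ Finset.range n, (rr s) ^ i) ≤ (1 - rr s)⁻¹ := by
  have h := tsum_geometric_of_lt_one (rr_pos s).le (rr_lt_one hs)
  rw [← h]
  exact Summable.sum_le_tsum _ (fun i _ => pow_nonneg (rr_pos s).le i)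
    (summable_geometric_of_lt_one (rr_pos s).le (rr_lt_one hs))

lemma root_len : DI.root.len = 1 := by simp [DI.root, DI.len]

lemma root_set : DI.root.set = Set.Ico (0:ℝ) 1 := by
  rw [DI.root, DI.set]; norm_num

lemma volume_I01 : volume I01 = 1 := by rw [I01, Real.volume_Icc]; norm_num

lemma capa_lower_aux {s : ℝ} (hs : s ∈ Set.Ioo (1/2 : ℝ) 1) (p : DI) (f : ℝ → ℝ)
    (hmem : MemHs s f) (hae : ∀ᵐ x ∂(volume.restrict p.set), 1 ≤ f x) :
    ENNReal.ofReal (c0 s) ≤ hsNormSq s f := by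
  by_contra hcon
  rw [not_le] at hcon
  have hfl2 : MemL2 f := hmem.1
  have hfint : IntegrableOn f I01 := hfl2.integrable (by norm_num)
  have hfin : hdotSq s f ≠ ⊤ := by
    refine ne_top_of_le_ne_top hmem.2.ne ?_
    rw [hsNormSq]; exact le_self_add
  set L := ∫ x in I01, (f x)^2 with hLdef
  have hL0 : 0 ≤ L := integral_nonneg (fun x => sq_nonneg _)
  set A := (hdotSq s f).toReal with hAdef
  have hA0 : 0 ≤ A := ENNReal.toReal_nonneg
  have hAlt : A < c0 s := by
    apply ENNReal.toReal_lt_of_lt_ofReal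
    exact lt_of_le_of_lt (by rw [hsNormSq]; exact le_self_add) hcon
  have hLlt : L < c0 s := by
    have h1 : ENNReal.ofReal L < ENNReal.ofReal (c0 s) :=
      lt_of_le_of_lt (by rw [hsNormSq]; exact le_add_self) hcon
    exact (ENNReal.ofReal_lt_ofReal_iff_of_nonneg hL0).mp h1
  -- 1 ≤ avg f p
  haveI : IsFiniteMeasure (volume.restrict p.set) := by
    constructor
    rw [Measure.restrict_apply_univ, p.volume_set]
    exact ENNReal.ofReal_lt_top
  have havg1 : 1 ≤ avg f p := by
    have hi : IntegrableOn f p.set := hfint.mono_set p.subset_I01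
    have h1' : ∫ x in p.set, (1:ℝ) ≤ ∫ x in p.set, f x :=
      integral_mono_ae (integrable_const 1) hi hae
    rw [setIntegral_const, measureReal_def, p.volume_set, ENNReal.toReal_ofReal p.len_pos.le,
      smul_eq_mul, mul_one] at h1'
    rw [avg_eq]
    calc (1:ℝ) = (1 / p.len) * p.len := by
          rw [one_div, inv_mul_cancel₀ p.len_pos.ne']
      _ ≤ (1 / p.len) * itg f p := by
          exact mul_le_mul_of_nonneg_left h1' (le_of_lt (one_div_pos.mpr p.len_pos))
  -- |avg f root| ≤ (L+1)/2
  have hroot : |avg f DI.root| ≤ (L + 1) / 2 := by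
    have h1 : |avg f DI.root| ≤ ∫ x in I01, |f x| := by
      rw [avg_eq, root_len]
      rw [one_div_one, one_mul]
      calc |itg f DI.root| ≤ ∫ x in DI.root.set, |f x| := by
            have := norm_integral_le_integral_norm (μ := volume.restrict DI.root.set) f
            simpa [Real.norm_eq_abs, itg] using this
        _ ≤ ∫ x in I01, |f x| := by
            apply setIntegral_mono_set hfint.abs
            · filter_upwards with x using abs_nonneg _
            · exact HasSubset.Subset.eventuallyLE DI.root.subset_I01
    have hsq : Integrable (fun x => (f x)^2) (volume.restrict I01) := hfl2.integrable_sq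
    have h2 : ∫ x in I01, |f x| ≤ ∫ x in I01, ((f x)^2 + 1)/2 := by
      apply integral_mono hfint.abs
      · exact (hsq.add (integrable_const 1)).div_const 2
      · intro x
        have h3 : 0 ≤ (|f x| - 1)^2 := sq_nonneg _
        have h4 : |f x|^2 = (f x)^2 := sq_abs _
        simp only
        nlinarith
    have h3 : ∫ x in I01, ((f x)^2 + 1)/2 = (L + 1)/2 := by
      rw [integral_div, integral_add hsq (integrable_const 1), setIntegral_const, measureReal_def, volume_I01]
      norm_num
      rfl
    linarith
  -- chain bound
  have hchain : |avg f p - avg f DI.root| ≤ (1 - rr s)⁻¹ * Real.sqrt A := by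
    calc |avg f p - avg f DI.root|
        ≤ (∑ i ∈ Finset.range p.j, (rr s) ^ i) * Real.sqrt A :=
          avg_chain_bound s hs f hfint hfin p.j p rfl
      _ ≤ (1 - rr s)⁻¹ * Real.sqrt A := by
          apply mul_le_mul_of_nonneg_right (geom_bound hs p.j) (Real.sqrt_nonneg _)
  have hr1 := rr_lt_one hs
  have hsqrtA : Real.sqrt A ≤ (1 - rr s)/4 := by
    calc Real.sqrt A ≤ Real.sqrt (c0 s) := Real.sqrt_le_sqrt hAlt.le
      _ ≤ Real.sqrt (((1 - rr s)/4)^2) := Real.sqrt_le_sqrt (min_le_right _ _)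
      _ = (1 - rr s)/4 := Real.sqrt_sq (by linarith)
  have hne : (1 - rr s) ≠ 0 := by linarith
  have hK : (1 - rr s)⁻¹ * Real.sqrt A ≤ 1/4 := by
    calc (1 - rr s)⁻¹ * Real.sqrt A ≤ (1 - rr s)⁻¹ * ((1 - rr s)/4) := by
          exact mul_le_mul_of_nonneg_left hsqrtA (inv_nonneg.mpr (by linarith))
      _ = 1/4 := by field_simp
  have hc0q : c0 s ≤ 1/4 := min_le_left _ _
  have : avg f p ≤ |avg f DI.root| + |avg f p - avg f DI.root| := by
    have := abs_sub_abs_le_abs_sub (avg f p) (avg f DI.root)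
    calc avg f p ≤ |avg f p| := le_abs_self _
      _ ≤ |avg f DI.root| + |avg f p - avg f DI.root| := by
          have h := abs_sub_le (avg f p) (avg f DI.root) 0
          simp only [sub_zero] at h
          linarith [abs_sub_le (avg f p) (avg f DI.root) 0]
  linarith
end Capa
section CapB
open MeasureTheory

lemma capa_lower {s : ℝ} (hs : s ∈ Set.Ioo (1/2 : ℝ) 1) (p : DI) (E : Set ℝ)
    (hE : p.set ⊆ E) : ENNReal.ofReal (c0 s) ≤ capa s E := by
  rw [capa]
  refine le_iInf fun f => le_iInf fun hmem => le_iInf fun hae => ?_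
  refine capa_lower_aux hs p f hmem ?_
  exact ae_mono (Measure.restrict_mono hE le_rfl) hae

lemma memL2_one : MemL2 (fun _ : ℝ => (1:ℝ)) := memLp_const 1

lemma inn_one_haar (p : DI) : inn (fun _ => (1:ℝ)) (haar p) = 0 := by
  rw [inn_haar _ ((memL2_one).integrable (by norm_num)) p]
  have h : ∀ q : DI, itg (fun _ => (1:ℝ)) q = q.len := by
    intro q
    rw [itg, setIntegral_const, measureReal_def, q.volume_set, ENNReal.toReal_ofReal q.len_pos.le,
      smul_eq_mul, mul_one]
  rw [h, h, p.left_len, p.right_len]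
  ring

lemma hdotSq_one (s : ℝ) : hdotSq s (fun _ => (1:ℝ)) = 0 := by
  rw [hdotSq]
  convert tsum_zero with p
  rw [inn_one_haar p]
  norm_num

lemma hsNormSq_one (s : ℝ) : hsNormSq s (fun _ => (1:ℝ)) = 1 := by
  rw [hsNormSq, hdotSq_one, zero_add]
  rw [show (∫ x in I01, ((1:ℝ)) ^ 2) = 1 by
    rw [show (fun x : ℝ => (1:ℝ)^2) = fun _ : ℝ => (1:ℝ) by norm_num, setIntegral_const,
      measureReal_def, volume_I01]; norm_num]
  norm_num

lemma memHs_one (s : ℝ) : MemHs s (fun _ => (1:ℝ)) :=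
  ⟨memL2_one, by rw [hsNormSq_one]; norm_num⟩

lemma capa_upper (s : ℝ) (E : Set ℝ) : capa s E ≤ 1 := by
  rw [capa]
  calc ⨅ (f : ℝ → ℝ) (_ : MemHs s f) (_ : ∀ᵐ x ∂(volume.restrict E), 1 ≤ f x), hsNormSq s f
      ≤ hsNormSq s (fun _ => (1:ℝ)) := by
        refine iInf_le_of_le (fun _ => 1) (iInf_le_of_le (memHs_one s)
          (iInf_le_of_le ?_ le_rfl))
        filter_upwards with x using le_rfl
    _ = 1 := hsNormSq_one s

end CapB
section Final
open MeasureTheory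

lemma tsum_root_subtype (g : DI → ℝ≥0∞) :
    (∑' J : {J : DI // J.set ⊆ DI.root.set}, g J) = ∑' J : DI, g J := by
  have h : ∀ J : DI, J.set ⊆ DI.root.set := by
    intro J; rw [root_set]; exact J.set_subset
  exact (Equiv.subtypeUnivEquiv h).tsum_eq g

lemma num_le (s : ℝ) (b : ℝ → ℝ) (F : Finset DI)
    (hF : (F : Set DI).Pairwise fun p q => Disjoint p.set q.set) :
    (∑ p ∈ F, ∑' J : {J : DI // J.set ⊆ p.set},
        ENNReal.ofReal ((J : DI).len ^ (-(2 * s)) * (inn b (haar J)) ^ 2)) ≤ hdotSq s b := by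
  set g : DI → ℝ≥0∞ := fun J => ENNReal.ofReal (J.len ^ (-(2*s)) * (inn b (haar J))^2) with hg
  have h1 : ∀ p : DI, (∑' J : {J : DI // J.set ⊆ p.set},
      ENNReal.ofReal ((J : DI).len ^ (-(2 * s)) * (inn b (haar J)) ^ 2))
      = ∑' J : DI, Set.indicator {J : DI | J.set ⊆ p.set} g J := by
    intro p
    exact tsum_subtype {J : DI | J.set ⊆ p.set} g
  calc (∑ p ∈ F, ∑' J : {J : DI // J.set ⊆ p.set},
        ENNReal.ofReal ((J : DI).len ^ (-(2 * s)) * (inn b (haar J)) ^ 2))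
      = ∑ p ∈ F, ∑' J : DI, Set.indicator {J : DI | J.set ⊆ p.set} g J :=
        Finset.sum_congr rfl (fun p _ => h1 p)
    _ = ∑' J : DI, ∑ p ∈ F, Set.indicator {J : DI | J.set ⊆ p.set} g J :=
        (Summable.tsum_finsetSum (fun p _ => ENNReal.summable)).symm
    _ ≤ ∑' J : DI, g J := by
        apply ENNReal.tsum_le_tsum
        intro J
        by_cases hex : ∃ p ∈ F, J.set ⊆ p.set
        · obtain ⟨p₀, hp₀F, hsub⟩ := hex
          have hz : ∀ q ∈ F, q ≠ p₀ →
              Set.indicator {J : DI | J.set ⊆ q.set} g J = 0 := by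
            intro q hq hne
            rw [Set.indicator_of_notMem]
            intro hJq
            have hd : Disjoint q.set p₀.set := hF hq hp₀F hne
            have hb : J.set ≤ ⊥ := hd hJq hsub
            exact J.set_nonempty.ne_empty (le_bot_iff.mp hb)
          rw [Finset.sum_eq_single_of_mem p₀ hp₀F hz]
          exact Set.indicator_le_self _ _ J
        · push_neg at hex
          rw [Finset.sum_eq_zero]
          · exact zero_le
          · intro q hq
            rw [Set.indicator_of_notMem]
            exact hex q hq

lemma hdot_le_bmo (s : ℝ) (b : ℝ → ℝ) : hdotSq s b ≤ bmoSq s b := by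
  rw [bmoSq]
  have hpair : (↑({DI.root} : Finset DI) : Set DI).Pairwise
      fun p q => Disjoint p.set q.set := by
    rw [Finset.coe_singleton]
    exact Set.pairwise_singleton _ _
  refine le_trans ?_ (le_iSup₂ ({DI.root} : Finset DI) hpair)
  rw [Finset.sum_singleton]
  rw [tsum_root_subtype (fun J => ENNReal.ofReal (J.len ^ (-(2*s)) * (inn b (haar J))^2))]
  have hU : (⋃ p ∈ ({DI.root} : Finset DI), p.set) = DI.root.set := by simp
  rw [hU]
  calc hdotSq s b = hdotSq s b / 1 := (div_one _).symm
    _ ≤ hdotSq s b / capa s DI.root.set :=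
        ENNReal.div_le_div_left (capa_upper s _) _
    _ = _ := rfl

lemma bmo_le_hdot {s : ℝ} (hs : s ∈ Set.Ioo (1/2 : ℝ) 1) (b : ℝ → ℝ) :
    bmoSq s b ≤ hdotSq s b / ENNReal.ofReal (c0 s) := by
  rw [bmoSq]
  refine iSup₂_le fun F hF => ?_
  rcases F.eq_empty_or_nonempty with hFe | ⟨p₀, hp₀⟩
  · subst hFe
    rw [Finset.sum_empty, ENNReal.zero_div]
    exact zero_le
  · refine ENNReal.div_le_div (num_le s b F hF) ?_
    refine capa_lower hs p₀ _ ?_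
    exact Set.subset_iUnion₂ (s := fun p (_ : p ∈ F) => p.set) p₀ hp₀

end Final

/-- For `s ∈ (1/2,1)`, `BMO^s = Ḣ^s` with equivalent norms: there are
`c, C > 0` depending only on `s` such that for every real-valued `b ∈ L¹([0,1])`,
`b ∈ BMO^s ↔ ‖b‖_{Ḣ^s} < ∞`, and `c‖b‖_{Ḣ^s} ≤ ‖b‖_{BMO^s} ≤ C‖b‖_{Ḣ^s}`. -/
theorem BMOs_eq_hdot (s : ℝ) (hs : s ∈ Set.Ioo (1 / 2 : ℝ) 1) :
    ∃ c C : ℝ, 0 < c ∧ 0 < C ∧ ∀ b : ℝ → ℝ, IntegrableOn b I01 →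
      (MemBMOs s b ↔ hdotSq s b < ⊤) ∧
      ENNReal.ofReal c * hdotNorm s b ≤ bmoNorm s b ∧
      bmoNorm s b ≤ ENNReal.ofReal C * hdotNorm s b := by
  have hc0 := c0_pos hs
  refine ⟨1, ((c0 s)⁻¹) ^ ((1:ℝ)/2), one_pos,
    Real.rpow_pos_of_pos (inv_pos.mpr hc0) _, ?_⟩
  intro b hb
  have hlow := hdot_le_bmo s b
  have hup := bmo_le_hdot hs b
  refine ⟨⟨?_, ?_⟩, ?_, ?_⟩
  · intro h
    exact lt_of_le_of_lt hlow (lt_top_iff_ne_top.mpr h)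
  · intro h
    show bmoSq s b ≠ ⊤
    refine ne_top_of_le_ne_top ?_ hup
    exact (ENNReal.div_lt_top h.ne (ENNReal.ofReal_pos.mpr hc0).ne').ne
  · rw [ENNReal.ofReal_one, one_mul, hdotNorm, bmoNorm]
    exact ENNReal.rpow_le_rpow hlow (by norm_num)
  · rw [bmoNorm, hdotNorm]
    calc bmoSq s b ^ (1/2:ℝ) ≤ (hdotSq s b / ENNReal.ofReal (c0 s)) ^ (1/2:ℝ) :=
          ENNReal.rpow_le_rpow hup (by norm_num)
      _ = (hdotSq s b * (ENNReal.ofReal (c0 s))⁻¹) ^ (1/2:ℝ) := by rw [div_eq_mul_inv]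
      _ = hdotSq s b ^ (1/2:ℝ) * ((ENNReal.ofReal (c0 s))⁻¹) ^ (1/2:ℝ) :=
          ENNReal.mul_rpow_of_nonneg _ _ (by norm_num)
      _ = ENNReal.ofReal (((c0 s)⁻¹) ^ ((1:ℝ)/2)) * hdotSq s b ^ (1/2:ℝ) := by
          rw [mul_comm]
          congr 1
          rw [← ENNReal.ofReal_inv_of_pos hc0,
            ENNReal.ofReal_rpow_of_pos (inv_pos.mpr hc0)]
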